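/- arXiv:1502.00389 — 2 statements merged into one kernel-verified Lean document; each statement's English description precedes it below -/
import Mathlib

section
/- Let n, k be natural numbers, W a subset of Fin n, v, p : Fin n → Bool, part : Fin n → Fin k an assignment of bit positions to parts, ι a type, and σ : Fin n → Bool → ι a function such that (1) σ i b = σ j b' implies i = j, and (2) for each i, σ i false = σ i true holds if and only if i ∈ W. Then in MvPolynomial ι ℤ, the whole-rule equality ∏_{i : Fin n} X_{σ i (p i)} = ∏_{i : Fin n} X_{σ i (v i)} holds if and only if for every part j : Fin k the partial equality ∏_{i : part i = j} X_{σ i (p i)} = ∏_{i : part i = j} X_{σ i (v i)} holds. -/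
/-! Since distinct positions use distinct indeterminates, each zero test holds exactly when
`σ i (p i) = σ i (v i)` for every position `i` it covers; a conjunction over all positions is
the conjunction over the parts. -/

open MvPolynomial

/-- `X (f i)` is prime and divides the right-hand side, so it equals some `X (g j)`; the
cross-injectivity hypothesis then forces `j = i`. -/
theorem MvPolynomial.prod_X_eq_prod_X_iff {R α ι : Type*} [CommRing R] [IsDomain R]
    (s : Finset α) (f g : α → ι) (hfg : ∀ i ∈ s, ∀ j ∈ s, f i = g j → i = j) :
    (∏ i ∈ s, (X (f i) : MvPolynomial ι R)) = ∏ i ∈ s, X (g i) ↔ ∀ i ∈ s, f i = g i := by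
  refine ⟨fun h i hi => ?_, fun h => Finset.prod_congr rfl fun i hi => by rw [h i hi]⟩
  have hdvd : (X (f i) : MvPolynomial ι R) ∣ ∏ j ∈ s, X (g j) :=
    h ▸ Finset.dvd_prod_of_mem _ hi
  obtain ⟨j, hj, hij⟩ := (X_prime.dvd_finsetProd_iff _).mp hdvd
  have hfi : f i = g j := X_dvd_X.mp hij
  obtain rfl := hfg i hi j hj hfi
  exact hfi

theorem divide_and_conquer_correct_general (n k : ℕ) (v p : Fin n → Bool)
    (part : Fin n → Fin k) (ι : Type*) (σ : Fin n → Bool → ι)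
    (hinj : ∀ i j b b', σ i b = σ j b' → i = j) :
    (∏ i : Fin n, (X (σ i (p i)) : MvPolynomial ι ℤ)) =
        ∏ i : Fin n, X (σ i (v i)) ↔
      ∀ j : Fin k,
        (∏ i ∈ Finset.univ.filter (fun i => part i = j),
            (X (σ i (p i)) : MvPolynomial ι ℤ)) =
          ∏ i ∈ Finset.univ.filter (fun i => part i = j), X (σ i (v i)) := by
  have prod_eq_iff (s : Finset (Fin n)) :=
    prod_X_eq_prod_X_iff (R := ℤ) s (fun i => σ i (p i)) (fun i => σ i (v i))
      fun i _ j _ => hinj i j _ _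
  simp only [prod_eq_iff, Finset.mem_univ, Finset.mem_filter, true_and, forall_const]
  exact ⟨fun h _ i _ => h i, fun h i => h (part i) i rfl⟩

/-- Correctness of the divide-and-conquer scheme: the whole-rule zero test
succeeds iff the partial zero test succeeds on every part. -/
theorem divide_and_conquer_correct (n k : ℕ) (W : Set (Fin n)) (v p : Fin n → Bool)
    (part : Fin n → Fin k) (ι : Type*) (σ : Fin n → Bool → ι)
    (hinj : ∀ i j b b', σ i b = σ j b' → i = j)
    (hW : ∀ i, σ i false = σ i true ↔ i ∈ W) :
    (∏ i : Fin n, (X (σ i (p i)) : MvPolynomial ι ℤ)) =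
        ∏ i : Fin n, X (σ i (v i)) ↔
      ∀ j : Fin k,
        (∏ i ∈ Finset.univ.filter (fun i => part i = j),
            (X (σ i (p i)) : MvPolynomial ι ℤ)) =
          ∏ i ∈ Finset.univ.filter (fun i => part i = j), X (σ i (v i)) :=
  divide_and_conquer_correct_general n k v p part ι σ hinj
end

section
/- Let n be a natural number and let a firewall f be a list of rules, where rule ℓ is given by (v_ℓ, W_ℓ) with v_ℓ : Fin n → Bool and W_ℓ ⊆ Fin n. For each ℓ let ι_ℓ be a type and σ_ℓ : Fin n → Bool → ι_ℓ a function such that σ_ℓ i b = σ_ℓ j b' implies i = j, and σ_ℓ i false = σ_ℓ i true holds if and only if i ∈ W_ℓ. Then for every packet p : Fin n → Bool, the first index ℓ (if any) at which the obfuscated test succeeds, i.e., at which ∏_{i : Fin n} X_{σ_ℓ i (p i)} = ∏_{i : Fin n} X_{σ_ℓ i (v_ℓ i)} holds in MvPolynomial ι_ℓ ℤ, equals the first index ℓ (if any) at which p matches the plain rule (v_ℓ, W_ℓ), i.e., p i = v_ℓ i for all i ∉ W_ℓ; in particular one index exists if and only if the other does. -/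
/-!
Each obfuscated product is a monomial, so two of them are equal exactly when the underlying
multisets of indeterminates agree. Since `σ ℓ` keeps positions apart, this happens exactly when
`σ ℓ i (p i) = σ ℓ i (v_ℓ i)` at every position, i.e. when `p i = v_ℓ i` or both bit values of
position `i` are sent to the same indeterminate, which is the wildcard condition `i ∈ W_ℓ`. So the
obfuscated test and the plain match agree rule by rule, and hence so do their first successes.
-/

open MvPolynomial

namespace MvPolynomial

variable {R σ : Type*} [CommSemiring R]

theorem prod_map_X_eq_monomial [DecidableEq σ] (s : Multiset σ) :
    (s.map X).prod = monomial (Multiset.toFinsupp s) (1 : R) := by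
  induction s using Multiset.induction with
  | empty => simp
  | cons a s ih =>
    simp [ih, X, monomial_mul, ← Multiset.singleton_add, Multiset.toFinsupp_add,
      Multiset.toFinsupp_singleton]

theorem prod_map_X_inj [Nontrivial R] {s t : Multiset σ} :
    ((s.map X).prod : MvPolynomial σ R) = (t.map X).prod ↔ s = t := by
  classical
  simp only [prod_map_X_eq_monomial, (monomial_left_injective one_ne_zero).eq_iff,
    EmbeddingLike.apply_eq_iff_eq]

theorem prod_X_eq_prod_X_iff_s10 [Nontrivial R] {α : Type*} [Fintype α] {a b : α → σ}
    (h : ∀ i j, a i = b j → i = j) :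
    ((∏ i, X (a i) : MvPolynomial σ R) = ∏ i, X (b i)) ↔ ∀ i, a i = b i := by
  refine ⟨fun hab i => ?_, fun hab => by simp only [hab]⟩
  have hmap : Finset.univ.val.map a = Finset.univ.val.map b := by
    rw [← prod_map_X_inj (R := R)]
    simpa only [Multiset.map_map, Function.comp_def, Finset.prod_map_val] using hab
  obtain ⟨j, -, hj⟩ :=
    Multiset.mem_map.mp (hmap ▸ Multiset.mem_map_of_mem a (Finset.mem_univ_val i))
  exact h i j hj.symm ▸ hj.symm

end MvPolynomial

theorem Bool.apply_eq_apply_iff {β : Type*} (g : Bool → β) (b b' : Bool) :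
    g b = g b' ↔ b = b' ∨ g false = g true := by
  cases b <;> cases b' <;> simp [eq_comm]

theorem prod_X_encode_eq_iff {R ι α : Type*} [CommSemiring R] [Nontrivial R] [Fintype α]
    (σ : α → Bool → ι) (W : Set α) (v p : α → Bool)
    (hinj : ∀ i j b b', σ i b = σ j b' → i = j) (hW : ∀ i, σ i false = σ i true ↔ i ∈ W) :
    ((∏ i, X (σ i (p i)) : MvPolynomial ι R) = ∏ i, X (σ i (v i))) ↔
      ∀ i, i ∉ W → p i = v i := by
  rw [prod_X_eq_prod_X_iff_s10 fun i j => hinj i j _ _]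
  refine forall_congr' fun i => ?_
  rw [Bool.apply_eq_apply_iff, hW, or_iff_not_imp_right]

/-- End-to-end functional correctness of the obfuscated firewall: for every
packet, the first rule index at which the obfuscated zero test succeeds is the
first index at which the packet matches the plain rule; in particular one such
index exists iff the other does. -/
theorem obfuscated_firewall_correct (n : ℕ)
    (f : List ((Fin n → Bool) × Set (Fin n)))
    (ι : Fin f.length → Type*)
    (σ : (ℓ : Fin f.length) → Fin n → Bool → ι ℓ)
    (hinj : ∀ (ℓ : Fin f.length) (i j : Fin n) (b b' : Bool),
      σ ℓ i b = σ ℓ j b' → i = j)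
    (hW : ∀ (ℓ : Fin f.length) (i : Fin n),
      σ ℓ i false = σ ℓ i true ↔ i ∈ (f.get ℓ).2)
    (p : Fin n → Bool) :
    (∀ ℓ : Fin f.length,
      (((∏ i : Fin n, (X (σ ℓ i (p i)) : MvPolynomial (ι ℓ) ℤ)) =
            ∏ i : Fin n, X (σ ℓ i ((f.get ℓ).1 i))) ∧
        ∀ m : Fin f.length, m < ℓ →
          ¬ ((∏ i : Fin n, (X (σ m i (p i)) : MvPolynomial (ι m) ℤ)) =
              ∏ i : Fin n, X (σ m i ((f.get m).1 i)))) ↔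
      ((∀ i : Fin n, i ∉ (f.get ℓ).2 → p i = (f.get ℓ).1 i) ∧
        ∀ m : Fin f.length, m < ℓ →
          ¬ (∀ i : Fin n, i ∉ (f.get m).2 → p i = (f.get m).1 i))) ∧
    ((∃ ℓ : Fin f.length,
        (∏ i : Fin n, (X (σ ℓ i (p i)) : MvPolynomial (ι ℓ) ℤ)) =
          ∏ i : Fin n, X (σ ℓ i ((f.get ℓ).1 i))) ↔
      (∃ ℓ : Fin f.length,
        ∀ i : Fin n, i ∉ (f.get ℓ).2 → p i = (f.get ℓ).1 i)) := by
  have key := fun ℓ => prod_X_encode_eq_iff (R := ℤ) (σ ℓ) (f.get ℓ).2 (f.get ℓ).1 p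
    (hinj ℓ) (hW ℓ)
  simp only [key, iff_self, implies_true, and_self]
end
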